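/- arXiv:math/0309348 — 6 statements merged into one kernel-verified Lean document; each statement's English description precedes it below -/
import Mathlib

section
/- Let S be an even lattice of rank 2 and signature (1,1), and P ∈ S a primitive element with P·P = 2n > 0 and P·S = γℤ (γ > 0). Let f be a generator of the orthogonal complement of P in S. Then f·f = −2nδ/γ for some positive integer δ, det S = −γδ, and there exists an integer μ with gcd(μ, 2n/γ) = 1 such that S = {(xP + yf)/(2n/γ) : x, y ∈ ℤ, x ≡ μy (mod 2n/γ)}; moreover δ ≡ μ²γ (mod 4n/γ). -/
set_option maxHeartbeats 1000000 in
/-- For an even lattice `S` of rank 2 and signature (1,1) (equivalently, with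
negative Gram determinant), a primitive `P` with `P² = 2n > 0`, `P·S = γℤ`, and `f` a
generator of `P^⊥`, one has `f² = -2nδ/γ` with `δ > 0`, `det S = -γδ`, and there is `μ`
coprime to `2n/γ` with `δ ≡ μ²γ (mod 4n/γ)` such that
`S = {(xP+yf)/(2n/γ) : x ≡ μ y (mod 2n/γ)}`. -/
theorem stmt_1 {M : Type*} [AddCommGroup M] [Module ℤ M]
    (bas : Module.Basis (Fin 2) ℤ M)
    (B : M →ₗ[ℤ] M →ₗ[ℤ] ℤ)
    (hsymm : ∀ x y : M, B x y = B y x)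
    (heven : ∀ x : M, 2 ∣ B x x)
    (hdet : Matrix.det (Matrix.of fun i j => B (bas i) (bas j)) < 0)
    (P : M) (hprim : ∀ (k : ℤ) (x : M), k • x = P → IsUnit k)
    (n : ℤ) (hn : 0 < n) (hP2 : B P P = 2 * n)
    (γ : ℤ) (hγ : 0 < γ)
    (hdvd : ∀ x : M, γ ∣ B P x) (hex : ∃ x : M, B P x = γ)
    (f : M) (hfP : B P f = 0)
    (hfgen : ∀ x : M, B P x = 0 → ∃ k : ℤ, x = k • f) :
    ∃ δ μ : ℤ, 0 < δ ∧
      γ * B f f = -(2 * n * δ) ∧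
      Matrix.det (Matrix.of fun i j => B (bas i) (bas j)) = -(γ * δ) ∧
      Int.gcd μ (2 * n / γ) = 1 ∧
      (4 * n / γ) ∣ (δ - μ ^ 2 * γ) ∧
      (∀ z : M, ∃ x y : ℤ, (2 * n / γ) ∣ (x - μ * y) ∧
        (2 * n / γ) • z = x • P + y • f) ∧
      (∀ x y : ℤ, (2 * n / γ) ∣ (x - μ * y) →
        ∃ z : M, (2 * n / γ) • z = x • P + y • f) := by
  classical
  haveI : Module.Free ℤ M := Module.Free.of_basis bas
  have hγ0 : γ ≠ 0 := ne_of_gt hγ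
  have hdvd2n : γ ∣ 2 * n := by have := hdvd P; rwa [hP2] at this
  set m : ℤ := 2 * n / γ with hmdef
  have hm : γ * m = 2 * n := Int.mul_ediv_cancel' hdvd2n
  have hm0 : 0 < m := by nlinarith
  have hm_ne : m ≠ 0 := ne_of_gt hm0
  obtain ⟨e, he⟩ := hex
  have hPerp : B P (m • e - P) = 0 := by
    simp only [← Int.cast_smul_eq_zsmul ℤ, Int.cast_id]
    simp only [map_sub, map_smul, smul_eq_mul, he, hP2]
    linear_combination hm
  obtain ⟨k0, hk0⟩ := hfgen _ hPerp
  have hPeq : P = m • e - k0 • f := by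
    rw [← hk0]; abel
  have h1 : m * B e f = k0 * B f f := by
    have h1' : B f P = 0 := by rw [hsymm f P]; exact hfP
    rw [hPeq] at h1'
    simp only [← Int.cast_smul_eq_zsmul ℤ, Int.cast_id] at h1'
    simp only [map_sub, map_smul, smul_eq_mul] at h1'
    rw [hsymm f e] at h1'
    linarith
  have h2 : m * B e e - k0 * B e f = γ := by
    have h2' : B e P = γ := by rw [hsymm e P]; exact he
    rw [hPeq] at h2'
    simp only [← Int.cast_smul_eq_zsmul ℤ, Int.cast_id] at h2'
    simp only [map_sub, map_smul, LinearMap.sub_apply, LinearMap.smul_apply, smul_eq_mul] at h2'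
    linarith
  have hg : Int.gcd m k0 = 1 := by
    obtain ⟨m', hm'⟩ := (Int.gcd_dvd_left m k0 : (Int.gcd m k0 : ℤ) ∣ m)
    obtain ⟨k0', hk0''⟩ := (Int.gcd_dvd_right m k0 : (Int.gcd m k0 : ℤ) ∣ k0)
    set g : ℤ := (Int.gcd m k0 : ℤ) with hgdef
    have hgP : g • (m' • e - k0' • f) = P := by
      rw [hPeq, hm', hk0'']
      simp only [← Int.cast_smul_eq_zsmul ℤ, Int.cast_id]
      module
    have hu := hprim _ _ hgP
    rcases Int.isUnit_iff.mp hu with h | h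
    · rw [hgdef] at h; exact_mod_cast h
    · rw [hgdef] at h; omega
  have hcop : IsCoprime m k0 := Int.isCoprime_iff_gcd_eq_one.mpr hg
  have hmG : m ∣ B f f := hcop.dvd_of_dvd_mul_left ⟨B e f, h1.symm⟩
  obtain ⟨d0, hd0⟩ := hmG
  obtain ⟨δ, hδ⟩ : ∃ δ : ℤ, m * δ = -(B f f) := ⟨-d0, by rw [hd0]; ring⟩
  have hF : B e f = -(k0 * δ) := by
    have h5 : m * (B e f + k0 * δ) = 0 := by linear_combination h1 + k0 * hδ
    have h6 := (mul_eq_zero.mp h5).resolve_left hm_ne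
    linarith
  have hspan : ∀ z : M, ∃ c k : ℤ, z = c • e + k • f := by
    intro z
    obtain ⟨c, hc⟩ := hdvd z
    have hz : B P (z - c • e) = 0 := by
      simp only [← Int.cast_smul_eq_zsmul ℤ, Int.cast_id]
      simp only [map_sub, map_smul, smul_eq_mul, he, hc]
      ring
    obtain ⟨k, hk⟩ := hfgen _ hz
    exact ⟨c, k, by rw [← hk]; abel⟩
  have hBe : ∀ a b c d : ℤ, B (a • e + b • f) (c • e + d • f)
      = a*c*(B e e) + (a*d + b*c)*(B e f) + b*d*(B f f) := by
    intro a b c d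
    simp only [← Int.cast_smul_eq_zsmul ℤ, Int.cast_id]
    simp only [map_add, map_smul, LinearMap.add_apply, LinearMap.smul_apply, smul_eq_mul]
    rw [hsymm f e]
    ring
  obtain ⟨p0, q0, hb0⟩ := hspan (bas 0)
  obtain ⟨p1, q1, hb1⟩ := hspan (bas 1)
  have hdetS : B (bas 0) (bas 0) * B (bas 1) (bas 1)
      - B (bas 0) (bas 1) * B (bas 1) (bas 0) < 0 := by
    have h := hdet
    rw [Matrix.det_fin_two] at h
    simpa using h
  have hf0 : f ≠ 0 := by
    intro hf
    have hEf : B e f = 0 := by rw [hf]; simp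
    have hFf : B f f = 0 := by rw [hf]; simp
    have hzero : B (bas 0) (bas 0) * B (bas 1) (bas 1)
        - B (bas 0) (bas 1) * B (bas 1) (bas 0) = 0 := by
      rw [hb0, hb1]; simp only [hBe]; rw [hEf, hFf]; ring
    linarith
  have hindep : ∀ a b : ℤ, a • e + b • f = 0 → a = 0 ∧ b = 0 := by
    intro a b hab
    have ha : a * γ + b * 0 = 0 := by
      have h := congrArg (fun w => B P w) hab
      simp only [← Int.cast_smul_eq_zsmul ℤ, Int.cast_id] at h
      simpa [map_add, map_smul, smul_eq_mul, he, hfP] using h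
    have ha' : a * γ = 0 := by linarith
    have ha0 : a = 0 := by
      rcases mul_eq_zero.mp ha' with h | h
      · exact h
      · exact absurd h hγ0
    refine ⟨ha0, ?_⟩
    rw [ha0, zero_smul, zero_add] at hab
    simp only [← Int.cast_smul_eq_zsmul ℤ, Int.cast_id] at hab
    rcases bas.smul_eq_zero.mp hab with h | h
    · exact h
    · exact absurd h hf0
  have hae := bas.sum_repr e
  rw [Fin.sum_univ_two] at hae
  have hbe := bas.sum_repr f
  rw [Fin.sum_univ_two] at hbe
  set a0 := bas.repr e 0
  set a1 := bas.repr e 1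
  set b0 := bas.repr f 0
  set b1 := bas.repr f 1
  rw [hb0, hb1] at hae hbe
  have hae' := sub_eq_zero_of_eq hae
  have hbe' := sub_eq_zero_of_eq hbe
  have h0e : (a0*p0 + a1*p1 - 1) • e + (a0*q0 + a1*q1) • f = 0 := by
    rw [← hae']
    simp only [← Int.cast_smul_eq_zsmul ℤ, Int.cast_id]
    module
  have h0f : (b0*p0 + b1*p1) • e + (b0*q0 + b1*q1 - 1) • f = 0 := by
    rw [← hbe']
    simp only [← Int.cast_smul_eq_zsmul ℤ, Int.cast_id]
    module
  obtain ⟨ha1, ha2⟩ := hindep _ _ h0e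
  obtain ⟨hb1', hb2'⟩ := hindep _ _ h0f
  have hdd : (a0*b1 - a1*b0) * (p0*q1 - p1*q0) = 1 := by
    linear_combination (b0*q0 + b1*q1) * ha1 + hb2' - (b0*p0 + b1*p1) * ha2
  have hd2 : (p0*q1 - p1*q0) * (p0*q1 - p1*q0) = 1 := by
    rcases Int.isUnit_iff.mp (IsUnit.of_mul_eq_one _
      (show (p0*q1 - p1*q0) * (a0*b1 - a1*b0) = 1 by linear_combination hdd)) with h | h <;>
      rw [h] <;> norm_num
  have hDet2 : Matrix.det (Matrix.of fun i j => B (bas i) (bas j))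
      = B e e * B f f - B e f * B e f := by
    rw [Matrix.det_fin_two]
    simp only [Matrix.of_apply]
    rw [hb0, hb1]
    simp only [hBe]
    linear_combination (B e e * B f f - B e f * B e f) * hd2
  rw [hDet2] at hdet
  have hkey : (2*n) * B f f = (m*m) * (B e e * B f f - B e f * B e f) := by
    linear_combination (-(B f f)) * hm + (-(m * B f f)) * h2 + (m * B e f) * h1
  have hGneg : B f f < 0 := by
    have h6 : (m*m) * (B e e * B f f - B e f * B e f) < 0 :=
      mul_neg_of_pos_of_neg (mul_pos hm0 hm0) hdet
    nlinarith [hkey, h6, hn]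
  have hδpos : 0 < δ := by nlinarith [hδ, hGneg, hm0]
  obtain ⟨u, v, huv⟩ := hcop
  obtain ⟨μ, t, hμk, hpar⟩ : ∃ μ t : ℤ, μ * k0 = m * t + 1 ∧ (2:ℤ) ∣ t * (m*t+2) * δ := by
    rcases Int.even_or_odd k0 with hke | hko
    · obtain ⟨k2, hk2⟩ := hke
      have hδe : (2:ℤ) ∣ δ := by
        have h2G : (2:ℤ) ∣ m * δ := by rw [hδ]; exact dvd_neg.mpr (heven f)
        rcases (Int.prime_two.dvd_mul.mp h2G) with h2m | h2d
        · exfalso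
          obtain ⟨m2, hm2⟩ := h2m
          have h9 : (1:ℤ) = 2 * (u*m2 + v*k2) := by
            linear_combination -huv + u*hm2 + v*hk2
          omega
        · exact h2d
      exact ⟨v, -u, by linear_combination huv, Dvd.dvd.mul_left hδe _⟩
    · rcases Int.even_or_odd u with hue | huo
      · obtain ⟨u2, hu2⟩ := hue
        exact ⟨v, -u, by linear_combination huv,
          Dvd.dvd.mul_right (Dvd.dvd.mul_right ⟨-u2, by omega⟩ _) _⟩
      · obtain ⟨a2, ha2'⟩ := huo
        obtain ⟨b2, hb2''⟩ := hko
        exact ⟨v + m, -u + k0, by linear_combination huv,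
          Dvd.dvd.mul_right (Dvd.dvd.mul_right ⟨b2 - a2, by omega⟩ _) _⟩
  refine ⟨δ, μ, hδpos, by linear_combination γ*hδ - δ*hm, ?_, ?_, ?_, ?_, ?_⟩
  · rw [hDet2]
    have h7 : (m*m) * (B e e * B f f - B e f * B e f) = (m*m) * (-(γ*δ)) := by
      linear_combination (-1)*hkey + (-(B f f))*hm + (γ*m)*hδ
    exact mul_left_cancel₀ (mul_ne_zero hm_ne hm_ne) h7
  · exact Int.isCoprime_iff_gcd_eq_one.mp ⟨k0, -t, by linear_combination hμk⟩
  · have h4 : 4 * n / γ = 2 * m := by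
      rw [show (4:ℤ) * n = γ * (2*m) by linear_combination (-2)*hm]
      exact Int.mul_ediv_cancel_left _ hγ0
    rw [h4]
    obtain ⟨s, hs⟩ := heven e
    obtain ⟨w, hw2⟩ := hpar
    have hγeq : γ = 2*m*s + k0^2*δ := by
      linear_combination (-1)*h2 + m*hs + (-k0)*hF
    exact ⟨-(w + s*μ^2), by
      linear_combination (-(μ^2))*hγeq + (-m)*hw2 + (-(δ*(μ*k0 + m*t + 1)))*hμk⟩
  · intro z
    obtain ⟨c, k, hz⟩ := hspan z
    refine ⟨c, c*k0 + m*k, ⟨-(c*t) - μ*k, by linear_combination (-c)*hμk⟩, ?_⟩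
    rw [hz, hPeq]
    simp only [← Int.cast_smul_eq_zsmul ℤ, Int.cast_id]
    module
  · intro x y hxy
    obtain ⟨q, hq⟩ := hxy
    refine ⟨x • e + (-(t*y) - k0*q) • f, ?_⟩
    have hco : m * (-(t*y) - k0*q) = y - x*k0 := by
      linear_combination k0*hq + y*hμk
    have h8 : m • ((x:ℤ) • e + (-(t*y) - k0*q) • f)
        = (m*x) • e + (m*(-(t*y) - k0*q)) • f := by
      simp only [← Int.cast_smul_eq_zsmul ℤ, Int.cast_id]
      module
    rw [h8, hco, hPeq]
    simp only [← Int.cast_smul_eq_zsmul ℤ, Int.cast_id]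
    module
end

section
/- Let a, b be coprime positive integers, d_a, d_b positive integers with d_a² | a and d_b² | b, and set d = d_a·d_b. Let m be an integer with m ≡ −1 (mod 2a) and m ≡ 1 (mod 2b). Then m ≡ 1 (mod 2ab/d²) or m ≡ −1 (mod 2ab/d²) holds if and only if a = d_a² or b = d_b². -/
theorem stmt_3 (a b da db : ℤ) (ha : 0 < a) (hb : 0 < b)
    (hda : 0 < da) (hdb : 0 < db)
    (hab : IsCoprime a b) (hda2 : da ^ 2 ∣ a) (hdb2 : db ^ 2 ∣ b)
    (m : ℤ) (hm1 : m ≡ -1 [ZMOD (2 * a)]) (hm2 : m ≡ 1 [ZMOD (2 * b)]) :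
    (m ≡ 1 [ZMOD (2 * a * b / (da * db) ^ 2)] ∨
     m ≡ -1 [ZMOD (2 * a * b / (da * db) ^ 2)]) ↔ (a = da ^ 2 ∨ b = db ^ 2) := by
  obtain ⟨a', ha'⟩ := hda2
  obtain ⟨b', hb'⟩ := hdb2
  have hda0 : (0:ℤ) < da ^ 2 := by positivity
  have hdb0 : (0:ℤ) < db ^ 2 := by positivity
  have ha'pos : 0 < a' := by nlinarith
  have hb'pos : 0 < b' := by nlinarith
  have hdiv : 2 * a * b / (da * db) ^ 2 = 2 * a' * b' := by
    have : 2 * a * b = (da * db) ^ 2 * (2 * a' * b') := by rw [ha', hb']; ring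
    rw [this, Int.mul_ediv_cancel_left _ (by positivity)]
  rw [hdiv]
  constructor
  · rintro (h | h)
    · left
      have h1 : m ≡ 1 [ZMOD 2 * a'] := h.of_dvd ⟨b', by ring⟩
      have h2 : m ≡ -1 [ZMOD 2 * a'] := hm1.of_dvd ⟨da ^ 2, by rw [ha']; ring⟩
      have h3 : (2 * a' : ℤ) ∣ 2 := by
        have := (h1.symm.trans h2).dvd
        simpa using this
      have := Int.le_of_dvd (by norm_num) h3
      have : a' = 1 := by omega
      rw [ha', this, mul_one]
    · right
      have h1 : m ≡ -1 [ZMOD 2 * b'] := h.of_dvd ⟨a', by ring⟩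
      have h2 : m ≡ 1 [ZMOD 2 * b'] := hm2.of_dvd ⟨db ^ 2, by rw [hb']; ring⟩
      have h3 : (2 * b' : ℤ) ∣ 2 := by
        have := (h1.symm.trans h2).dvd
        simpa using this
      have := Int.le_of_dvd (by norm_num) h3
      have : b' = 1 := by omega
      rw [hb', this, mul_one]
  · rintro (h | h)
    · have ha1 : a' = 1 := by
        have := h.symm.trans ha'
        nlinarith
      left
      exact hm2.of_dvd ⟨db ^ 2, by rw [hb', ha1]; ring⟩
    · have hb1 : b' = 1 := by
        have := h.symm.trans hb'
        nlinarith
      right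
      exact hm1.of_dvd ⟨da ^ 2, by rw [ha', hb1]; ring⟩
end

section
/- Let y, k, M be integers with k ≠ 0 and k² | y² + 4Mk. Then for every prime l not dividing 2M, the l-adic valuation of k is even. Consequently, k can be written as k = α·q² where q is a positive integer and α is a squarefree integer dividing 2M (when M ≠ 0). -/
lemma natdvd (l n : ℕ) (z : ℤ) : (l : ℤ) ^ n ∣ z ↔ l ^ n ∣ z.natAbs := by
  rw [← Int.natAbs_dvd_natAbs, Int.natAbs_pow, Int.natAbs_natCast]

lemma aux1 (y k M : ℤ) (hk : k ≠ 0) (hdvd : k ^ 2 ∣ y ^ 2 + 4 * M * k)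
    (l : ℕ) (hl : l.Prime) (hlM : ¬ (l : ℤ) ∣ 2 * M) :
    Even (k.natAbs.factorization l) := by
  by_contra hodd
  set v := k.natAbs.factorization l with hv
  have hkn : k.natAbs ≠ 0 := by simpa using hk
  have hlz : Prime (l : ℤ) := Nat.prime_iff_prime_int.mp hl
  have hv1 : 1 ≤ v := by
    rcases Nat.eq_zero_or_pos v with h | h
    · exact absurd (h ▸ Even.zero) hodd
    · exact h
  have hl4M : ¬ (l : ℤ) ∣ 4 * M := by
    intro h
    have h4 : (4 : ℤ) * M = 2 * (2 * M) := by ring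
    rcases (hlz.dvd_mul.mp (h4 ▸ h)) with h2 | h2
    · exact hlM (h2.trans ⟨M, rfl⟩)
    · exact hlM h2
  have hcop : ∀ n : ℕ, IsCoprime ((l : ℤ) ^ n) (4 * M) :=
    fun n => ((hlz.coprime_iff_not_dvd).mpr hl4M).pow_left
  have hvk : ((l : ℤ)) ^ v ∣ k := (natdvd l v k).mpr (Nat.ordProj_dvd _ _)
  have hnvk : ¬ ((l : ℤ)) ^ (v + 1) ∣ k := by
    intro h
    have := (Nat.Prime.pow_dvd_iff_le_factorization hl hkn).mp ((natdvd l (v+1) k).mp h)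
    omega
  have h2v : ((l : ℤ)) ^ (2 * v) ∣ y ^ 2 + 4 * M * k := by
    refine dvd_trans ?_ hdvd
    have := pow_dvd_pow_of_dvd hvk 2
    rwa [← pow_mul, mul_comm v 2] at this
  have h1 : ((l : ℤ)) ^ (v + 1) ∣ y ^ 2 + 4 * M * k :=
    (pow_dvd_pow _ (by omega)).trans h2v
  have hvy : ((l : ℤ)) ^ v ∣ y ^ 2 := by
    have h2 : ((l : ℤ)) ^ v ∣ 4 * M * k := Dvd.dvd.mul_left hvk _
    have := dvd_sub ((pow_dvd_pow _ (by omega : v ≤ v + 1)).trans h1) h2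
    simpa using this
  have hy : y ≠ 0 := by
    rintro rfl
    simp only [ne_eq, OfNat.ofNat_ne_zero, not_false_eq_true, zero_pow, zero_add] at h1
    have : ((l:ℤ))^(v+1) ∣ 4 * M * k := by simpa using h1
    exact hnvk ((hcop (v+1)).dvd_of_dvd_mul_left this)
  have hyn : (y ^ 2).natAbs ≠ 0 := by positivity
  have hle : v ≤ ((y ^ 2).natAbs).factorization l :=
    (Nat.Prime.pow_dvd_iff_le_factorization hl hyn).mp ((natdvd l v _).mp hvy)
  have heven : ∃ t, ((y ^ 2).natAbs).factorization l = 2 * t := by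
    have h2 : (y ^ 2).natAbs = y.natAbs ^ 2 := Int.natAbs_pow y 2
    rw [h2, Nat.factorization_pow]
    exact ⟨y.natAbs.factorization l, by simp [mul_comm]⟩
  obtain ⟨t, ht⟩ := heven
  obtain ⟨r, hr⟩ := Nat.not_even_iff_odd.mp hodd
  have hlt : v + 1 ≤ ((y ^ 2).natAbs).factorization l := by omega
  have hv1y : ((l : ℤ)) ^ (v + 1) ∣ y ^ 2 :=
    (natdvd l (v+1) _).mpr ((Nat.Prime.pow_dvd_iff_le_factorization hl hyn).mpr hlt)
  have h4Mk : ((l : ℤ)) ^ (v + 1) ∣ 4 * M * k := by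
    have := dvd_sub h1 hv1y
    simpa using this
  exact hnvk ((hcop (v+1)).dvd_of_dvd_mul_left h4Mk)

theorem stmt_5 (y k M : ℤ) (hk : k ≠ 0) (hdvd : k ^ 2 ∣ y ^ 2 + 4 * M * k) :
    (∀ l : ℕ, l.Prime → ¬ (l : ℤ) ∣ 2 * M → Even (k.natAbs.factorization l)) ∧
    (M ≠ 0 → ∃ α q : ℤ, Squarefree α ∧ α ∣ 2 * M ∧ 0 < q ∧ k = α * q ^ 2) := by
  refine ⟨fun l hl hlM => aux1 y k M hk hdvd l hl hlM, fun hM => ?_⟩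
  obtain ⟨a, b, hab, hsa⟩ := Nat.sq_mul_squarefree k.natAbs
  have hkn : k.natAbs ≠ 0 := by simpa using hk
  have ha : a ≠ 0 := hsa.ne_zero
  have hb : b ≠ 0 := by
    rintro rfl
    rw [← hab] at hkn
    simp at hkn
  have h2M : (2 : ℤ) * M ≠ 0 := by
    simp [hM]
  have h2Mn : (2 * M).natAbs ≠ 0 := by simpa using h2M
  -- a divides (2M).natAbs
  have hadvd : a ∣ (2 * M).natAbs := by
    rw [← Nat.factorization_le_iff_dvd ha h2Mn]
    intro p
    rcases Nat.eq_zero_or_pos (a.factorization p) with h0 | hpos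
    · simp [h0]
    · have hp : p.Prime := Nat.prime_of_mem_primeFactors
        ((Nat.support_factorization a) ▸ Finsupp.mem_support_iff.mpr (by omega))
      have hpa : p ∣ a := Nat.dvd_of_factorization_pos (by omega)
      have hp2M : (p : ℤ) ∣ 2 * M := by
        by_contra hnd
        have heven := aux1 y k M hk hdvd p hp hnd
        have hfk : k.natAbs.factorization p
            = 2 * b.factorization p + a.factorization p := by
          rw [← hab, Nat.factorization_mul (pow_ne_zero 2 hb) ha,
            Nat.factorization_pow]
          simp
        have hfa1 : a.factorization p ≤ 1 := hsa.natFactorization_le_one p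
        have hfa : a.factorization p = 1 := by omega
        rw [hfk, hfa] at heven
        rcases heven with ⟨t, ht⟩
        omega
      have hpd : p ∣ (2 * M).natAbs := by
        rw [← Int.natAbs_dvd_natAbs] at hp2M
        simpa using hp2M
      have h1 : 1 ≤ (2 * M).natAbs.factorization p :=
        hp.factorization_pos_of_dvd h2Mn hpd
      have h2 : a.factorization p ≤ 1 := hsa.natFactorization_le_one p
      omega
  have haZ : (a : ℤ) ∣ 2 * M := by
    have := Int.natCast_dvd_natCast.mpr hadvd
    exact this.trans (Int.natAbs_dvd.mpr dvd_rfl)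
  refine ⟨k.sign * a, b, ?_, ?_, by positivity, ?_⟩
  · rw [← Int.squarefree_natAbs, Int.natAbs_mul,
      Int.natAbs_sign_of_ne_zero hk, one_mul, Int.natAbs_natCast]
    exact hsa
  · have hsgn : k.sign = 1 ∨ k.sign = -1 := by
      rcases lt_trichotomy k 0 with h | h | h
      · exact Or.inr (Int.sign_eq_neg_one_of_neg h)
      · exact absurd h hk
      · exact Or.inl (Int.sign_eq_one_of_pos h)
    rcases hsgn with hs | hs <;> rw [hs]
    · simpa using haZ
    · simpa using (dvd_neg.mpr haZ).neg_left
  · calc k = k.sign * (k.natAbs : ℤ) := (Int.sign_mul_natAbs k).symm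
      _ = k.sign * ((b ^ 2 * a : ℕ) : ℤ) := by rw [hab]
      _ = k.sign * ↑a * (b : ℤ) ^ 2 := by push_cast; ring
end

section
/- Let a₁, b₁, c, γ, δ be positive integers with γ | 2a₁b₁c. The integral solutions (x, y) of γx² − δy² = 4a₁²b₁²c²/γ satisfying x ≡ 2a₁b₁c/γ (mod δ) or x ≡ −2a₁b₁c/γ (mod δ) are exactly the pairs (x, y) = ε·(2a₁b₁c/γ + αδq², αpq) with ε ∈ {1, −1}, where α is a squarefree integer dividing 2a₁b₁c, q is a nonnegative integer, and p is an integer with p² − γδq² = 4a₁b₁c/α. -/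
/-- Squarefree decomposition for nonzero integers. -/
lemma int_sq_decomp (t : ℤ) (ht : t ≠ 0) :
    ∃ α q : ℤ, Squarefree α ∧ 0 < q ∧ t = α * q ^ 2 := by
  obtain ⟨a, b, hab, hsf⟩ := Nat.sq_mul_squarefree t.natAbs
  have hb : (b : ℤ) ^ 2 * a = t.natAbs := by exact_mod_cast hab
  have hsfZ : Squarefree (a : ℤ) := by
    rw [← Int.squarefree_natAbs]; simpa using hsf
  have hb0 : 0 < (b : ℤ) := by
    rcases Nat.eq_zero_or_pos b with h | h
    · exfalso; apply ht; subst h; simp at hb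
      exact abs_eq_zero.mp hb.symm
    · exact_mod_cast h
  rcases Int.natAbs_eq t with h | h
  · exact ⟨a, b, hsfZ, hb0, by rw [h, ← hb]; ring⟩
  · refine ⟨-a, b, ?_, hb0, by rw [h, ← hb]; ring⟩
    rw [← Int.squarefree_natAbs] at hsfZ ⊢
    simpa using hsfZ

lemma sqfree_eq_of_mul_sq (α β w : ℤ) (hα : Squarefree α) (hβ : Squarefree β)
    (h : α * β = w ^ 2) : α = β := by
  have hdvd : α ∣ w ^ 2 := ⟨β, h.symm⟩
  have hαw : α ∣ w := (hα.dvd_pow_iff_dvd two_ne_zero).mp hdvd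
  obtain ⟨v, hv⟩ := hαw
  have hα0 : α ≠ 0 := hα.ne_zero
  have hβv : β = α * v ^ 2 := by
    have : α * β = α * (α * v ^ 2) := by rw [h, hv]; ring
    exact mul_left_cancel₀ hα0 this
  have hvu : IsUnit v := hβ v ⟨α, by rw [hβv]; ring⟩
  rcases Int.isUnit_iff.mp hvu with h1 | h1 <;> subst h1 <;> simp [hβv]

/-- If `t * u = y^2` with `t ≠ 0`, both factors share a squarefree part. -/
lemma key_sq (t u y : ℤ) (ht : t ≠ 0) (h : t * u = y ^ 2) :
    ∃ α p q : ℤ, Squarefree α ∧ 0 ≤ q ∧ t = α * q ^ 2 ∧ u = α * p ^ 2 ∧ y = α * p * q := by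
  obtain ⟨α, q, hsα, hq, hteq⟩ := int_sq_decomp t ht
  rcases eq_or_ne u 0 with hu | hu
  · have hy : y = 0 := by
      have : y ^ 2 = 0 := by rw [← h, hu]; ring
      exact pow_eq_zero_iff two_ne_zero |>.mp this
    exact ⟨α, 0, q, hsα, hq.le, hteq, by simp [hu], by simp [hy]⟩
  · obtain ⟨β, r, hsβ, hr, hueq⟩ := int_sq_decomp u hu
    have hprod : α * β * (q * r) ^ 2 = y ^ 2 := by rw [← h, hteq, hueq]; ring
    have hqr : q * r ≠ 0 := by positivity
    have hdvd : (q * r) ^ 2 ∣ y ^ 2 := ⟨α * β, by linarith [hprod]⟩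
    have hqry : q * r ∣ y := (Int.pow_dvd_pow_iff two_ne_zero).mp hdvd
    obtain ⟨w, hw⟩ := hqry
    have hab : α * β = w ^ 2 := by
      have h2 : (q * r) ^ 2 * (α * β) = (q * r) ^ 2 * w ^ 2 := by
        rw [mul_comm ((q*r)^2) (α*β), hprod, hw]; ring
      exact mul_left_cancel₀ (pow_ne_zero 2 hqr) h2
    have hαβ : α = β := sqfree_eq_of_mul_sq α β w hsα hsβ hab
    subst hαβ
    have hy2 : y ^ 2 = (α * r * q) ^ 2 := by rw [← h, hteq, hueq]; ring
    have : (y - α * r * q) * (y + α * r * q) = 0 := by linear_combination hy2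
    rcases mul_eq_zero.mp this with h0 | h0
    · exact ⟨α, r, q, hsα, hq.le, hteq, hueq, by linarith⟩
    · exact ⟨α, -r, q, hsα, hq.le, hteq, by rw [hueq]; ring, by linarith⟩

lemma dvd_of_dvd_two_mul (α m : ℤ) (hsf : Squarefree α) (h2 : (2:ℤ) ∣ m)
    (h : α ∣ 2 * m) : α ∣ m := by
  by_cases h2α : (2:ℤ) ∣ α
  · obtain ⟨β, hβ⟩ := h2α
    have hβ2 : ¬ (2:ℤ) ∣ β := by
      rintro ⟨w, hw⟩
      have : IsUnit (2:ℤ) := hsf 2 ⟨w, by rw [hβ, hw]; ring⟩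
      rcases Int.isUnit_iff.mp this with h | h <;> omega
    have hβm : β ∣ m := by
      have h' : 2 * β ∣ 2 * m := hβ ▸ h
      exact (mul_dvd_mul_iff_left (two_ne_zero (α := ℤ))).mp h'
    have hcop : IsCoprime (2:ℤ) β := (Int.prime_two.coprime_iff_not_dvd).mpr hβ2
    rw [hβ]
    exact hcop.mul_dvd h2 hβm
  · have hcop : IsCoprime α 2 := ((Int.prime_two.coprime_iff_not_dvd).mpr h2α).symm
    exact hcop.dvd_of_dvd_mul_left h

/-- Forward construction. -/
lemma fwd_main (a1 b1 c γ δ k x y : ℤ) (habc : 0 < a1 * b1 * c) (hδ : 0 < δ)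
    (hk : 2 * a1 * b1 * c = γ * k)
    (heq : γ * x ^ 2 - δ * y ^ 2 = γ * k ^ 2) (hcong : δ ∣ k - x) :
    ∃ α p q : ℤ, Squarefree α ∧ α ∣ 2 * a1 * b1 * c ∧ 0 ≤ q ∧
      α * (p ^ 2 - γ * δ * q ^ 2) = 4 * a1 * b1 * c ∧
      x = k + α * δ * q ^ 2 ∧ y = α * p * q := by
  obtain ⟨s, hs⟩ := hcong
  have hx : x = k + δ * (-s) := by linarith
  subst hx
  have h2 : δ * ((-s) * (4 * a1 * b1 * c + γ * δ * (-s))) = δ * (y ^ 2) := by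
    linear_combination heq + (-2 * δ * s) * hk
  have h1 : (-s) * (4 * a1 * b1 * c + γ * δ * (-s)) = y ^ 2 :=
    mul_left_cancel₀ hδ.ne' h2
  rcases eq_or_ne s 0 with rfl | hs0
  · have hy : y = 0 := by
      have : y ^ 2 = 0 := by linear_combination -h1
      exact pow_eq_zero_iff two_ne_zero |>.mp this
    obtain ⟨α, p, hsα, hp, h4⟩ := int_sq_decomp (4 * a1 * b1 * c) (by linarith : (0:ℤ) < 4 * a1 * b1 * c).ne'
    have hαd : α ∣ 2 * a1 * b1 * c := by
      refine dvd_of_dvd_two_mul α (2 * a1 * b1 * c) hsα ⟨a1 * b1 * c, by ring⟩ ?_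
      exact ⟨p ^ 2, by linear_combination h4⟩
    exact ⟨α, p, 0, hsα, hαd, le_refl 0, by linear_combination -h4, by ring,
      by rw [hy]; ring⟩
  · obtain ⟨α, p, q, hsα, hq, ht, hu, hy⟩ :=
      key_sq (-s) (4 * a1 * b1 * c + γ * δ * (-s)) y (by omega) h1
    have hα4 : α * (p ^ 2 - γ * δ * q ^ 2) = 4 * a1 * b1 * c := by
      linear_combination (-1) * hu + γ * δ * ht
    have hαd : α ∣ 2 * a1 * b1 * c := by
      refine dvd_of_dvd_two_mul α (2 * a1 * b1 * c) hsα ⟨a1 * b1 * c, by ring⟩ ?_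
      exact ⟨p ^ 2 - γ * δ * q ^ 2, by linear_combination -hα4⟩
    exact ⟨α, p, q, hsα, hαd, hq, hα4, by linear_combination δ * ht, hy⟩

theorem stmt_6 (a1 b1 c γ δ : ℤ)
    (ha1 : 0 < a1) (hb1 : 0 < b1) (hc : 0 < c) (hγ : 0 < γ) (hδ : 0 < δ)
    (hγdvd : γ ∣ 2 * a1 * b1 * c) (x y : ℤ) :
    (γ * x ^ 2 - δ * y ^ 2 = 4 * a1 ^ 2 * b1 ^ 2 * c ^ 2 / γ ∧
      (x ≡ 2 * a1 * b1 * c / γ [ZMOD δ] ∨ x ≡ -(2 * a1 * b1 * c / γ) [ZMOD δ])) ↔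
    (∃ ε α p q : ℤ, (ε = 1 ∨ ε = -1) ∧ Squarefree α ∧ α ∣ 2 * a1 * b1 * c ∧
      0 ≤ q ∧ p ^ 2 - γ * δ * q ^ 2 = 4 * a1 * b1 * c / α ∧
      x = ε * (2 * a1 * b1 * c / γ + α * δ * q ^ 2) ∧ y = ε * (α * p * q)) := by
  obtain ⟨k, hk⟩ := hγdvd
  have hγ0 : γ ≠ 0 := hγ.ne'
  have hkdiv : 2 * a1 * b1 * c / γ = k := by
    rw [hk]; exact Int.mul_ediv_cancel_left k hγ0
  have hMdiv : 4 * a1 ^ 2 * b1 ^ 2 * c ^ 2 / γ = γ * k ^ 2 := by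
    rw [show (4 * a1 ^ 2 * b1 ^ 2 * c ^ 2 : ℤ) = γ * (γ * k ^ 2) by
      linear_combination (2 * a1 * b1 * c + γ * k) * hk]
    exact Int.mul_ediv_cancel_left _ hγ0
  have habc : 0 < a1 * b1 * c := by positivity
  rw [hMdiv, hkdiv]
  constructor
  · rintro ⟨heq, hcong | hcong⟩
    · have hd : δ ∣ k - x := Int.modEq_iff_dvd.mp hcong
      obtain ⟨α, p, q, hsα, hαd, hq, hα4, hx, hy⟩ :=
        fwd_main a1 b1 c γ δ k x y habc hδ hk heq hd
      refine ⟨1, α, p, q, Or.inl rfl, hsα, hαd, hq, ?_, by linear_combination hx, by linear_combination hy⟩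
      rw [show (4 * a1 * b1 * c : ℤ) = α * (p ^ 2 - γ * δ * q ^ 2) from hα4.symm,
        Int.mul_ediv_cancel_left _ hsα.ne_zero]
    · have hd : δ ∣ k - (-x) := by
        obtain ⟨s, hs⟩ := Int.modEq_iff_dvd.mp hcong
        exact ⟨-s, by linarith⟩
      have heq' : γ * (-x) ^ 2 - δ * (-y) ^ 2 = γ * k ^ 2 := by linear_combination heq
      obtain ⟨α, p, q, hsα, hαd, hq, hα4, hx, hy⟩ :=
        fwd_main a1 b1 c γ δ k (-x) (-y) habc hδ hk heq' hd
      refine ⟨-1, α, p, q, Or.inr rfl, hsα, hαd, hq, ?_, by linear_combination -hx, by linear_combination -hy⟩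
      rw [show (4 * a1 * b1 * c : ℤ) = α * (p ^ 2 - γ * δ * q ^ 2) from hα4.symm,
        Int.mul_ediv_cancel_left _ hsα.ne_zero]
  · rintro ⟨ε, α, p, q, hε, hsα, hαd, hq, hpq, hx, hy⟩
    obtain ⟨n, hn⟩ := hαd
    have hdiv4 : 4 * a1 * b1 * c / α = 2 * n := by
      rw [show (4 * a1 * b1 * c : ℤ) = α * (2 * n) by linear_combination 2 * hn]
      exact Int.mul_ediv_cancel_left _ hsα.ne_zero
    rw [hdiv4] at hpq
    have hε2 : ε ^ 2 = 1 := by rcases hε with rfl | rfl <;> ring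
    subst hx; subst hy
    refine ⟨?_, ?_⟩
    · linear_combination (γ * (k + α * δ * q ^ 2) ^ 2 - δ * (α * p * q) ^ 2) * hε2 +
        (-δ * α ^ 2 * q ^ 2) * hpq + (-2 * δ * α * q ^ 2) * hk + (2 * δ * α * q ^ 2) * hn
    · rcases hε with rfl | rfl
      · left; rw [Int.modEq_iff_dvd]; exact ⟨-(α * q ^ 2), by ring⟩
      · right; rw [Int.modEq_iff_dvd]; exact ⟨α * q ^ 2, by ring⟩
end

section
/- Let A, c be positive integers, γ a positive divisor of 2A, and α, p, q, δ, μ integers satisfying αp² − αγδq² = 4A and (4Ac/γ) | (δ − γμ²). Set x = 2A/γ + αδq² and y = αpq. Then x ≡ μy (mod 2Ac/γ) if and only if 4Ac | α(p − μγq)². -/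
theorem stmt_10 (A c γ α p q δ μ : ℤ) (hA : 0 < A) (hc : 0 < c)
    (hγpos : 0 < γ) (hγdvd : γ ∣ 2 * A)
    (heq : α * p ^ 2 - α * γ * δ * q ^ 2 = 4 * A)
    (hδ : (4 * A * c / γ) ∣ (δ - γ * μ ^ 2)) :
    (2 * A * c / γ) ∣ ((2 * A / γ + α * δ * q ^ 2) - μ * (α * p * q)) ↔
      (4 * A * c) ∣ α * (p - μ * γ * q) ^ 2 := by
  obtain ⟨k, hk⟩ := hγdvd
  have hγ0 : γ ≠ 0 := hγpos.ne'
  have h2A : 2 * A / γ = k := by rw [hk]; exact Int.mul_ediv_cancel_left k hγ0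
  have h2Ac : 2 * A * c / γ = k * c := by
    rw [hk, mul_assoc]; exact Int.mul_ediv_cancel_left _ hγ0
  have h4Ac : 4 * A * c / γ = 2 * k * c := by
    have h4 : 4 * A * c = γ * (2 * k * c) := by linear_combination 2 * c * hk
    rw [h4]; exact Int.mul_ediv_cancel_left _ hγ0
  rw [h2A, h2Ac]
  rw [h4Ac] at hδ
  obtain ⟨t, ht⟩ := hδ
  constructor
  · rintro ⟨s, hs⟩
    refine ⟨s - α * q ^ 2 * t, ?_⟩
    linear_combination heq + 2 * γ * hs - γ * α * q ^ 2 * ht +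
      (2 - 2 * c * (s - α * q ^ 2 * t)) * hk
  · rintro ⟨s, hs⟩
    refine ⟨s + α * q ^ 2 * t, ?_⟩
    have h2γ : (2 * γ : ℤ) ≠ 0 := by positivity
    have key : (k + α * δ * q ^ 2 - μ * (α * p * q)) * (2 * γ)
        = (k * c * (s + α * q ^ 2 * t)) * (2 * γ) := by
      linear_combination hs - heq + γ * α * q ^ 2 * ht + (2 * c * s - 2) * hk
    exact mul_right_cancel₀ h2γ key
end

section
/- Let N, γ, u be positive integers with γ | 2N and u | N, and let δ, μ₀ be integers with gcd(γμ₀, u) = 1 and δ ≡ γμ₀² (mod 4N/γ). Then there exists an integer μ with μ ≡ μ₀ (mod 2N/γ) and δ ≡ γμ² (mod (4N/γ)·u). -/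
theorem stmt_12 (N γ u : ℤ) (hN : 0 < N) (hγpos : 0 < γ) (hu : 0 < u)
    (hγdvd : γ ∣ 2 * N) (hudvd : u ∣ N)
    (δ μ0 : ℤ) (hcop : Int.gcd (γ * μ0) u = 1)
    (hδ : (4 * N / γ) ∣ (δ - γ * μ0 ^ 2)) :
    ∃ μ : ℤ, (2 * N / γ) ∣ (μ - μ0) ∧ ((4 * N / γ) * u) ∣ (δ - γ * μ ^ 2) := by
  obtain ⟨m, hm⟩ := hγdvd
  have hγ0 : γ ≠ 0 := hγpos.ne'
  have h2 : 2 * N / γ = m := by rw [hm, Int.mul_ediv_cancel_left _ hγ0]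
  have h4 : 4 * N / γ = 2 * m := by
    have : 4 * N = γ * (2 * m) := by rw [← mul_assoc, mul_comm γ 2, mul_assoc, ← hm]; ring
    rw [this, Int.mul_ediv_cancel_left _ hγ0]
  rw [h4] at hδ
  obtain ⟨s, hs⟩ := hδ
  obtain ⟨n, hn⟩ := hudvd
  have hc : IsCoprime (γ * μ0) u := Int.isCoprime_iff_gcd_eq_one.mpr hcop
  obtain ⟨x, y, hxy⟩ := hc
  refine ⟨μ0 + m * (s * x), ?_, ?_⟩
  · rw [h2]; exact ⟨s * x, by ring⟩
  · rw [h4]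
    refine ⟨s * y - n * (s * x) ^ 2, ?_⟩
    linear_combination hs + (-2) * m * s * hxy + m * s ^ 2 * x ^ 2 * hm -
      2 * m * s ^ 2 * x ^ 2 * hn
end
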